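/- arXiv:2601.04417 — 5 statements merged into one kernel-verified Lean document; each statement's English description precedes it below -/
import Mathlib

section
/- Given any countable collection of dense sets of pairs of strings (D_n)_{n∈ℕ}, there exist functions g₁, g₂ : ℕ → 2^{<ℕ} such that for every n and all strings γ₁, γ₂ of length n, the pair (γ₁⌢g₁(n), γ₂⌢g₂(n)) meets all of the sets D₀, D₁, ..., D_n. -/
/-- The initial segment `x↾n` of a real `x ∈ 2^ℕ`, as a binary string. -/
def restrictSeq (x : ℕ → Bool) (n : ℕ) : List Bool := List.ofFn (fun i : Fin n => x i)

/-- A set of strings is dense if every string has an extension in it. -/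
def DenseStr (D : Set (List Bool)) : Prop := ∀ σ : List Bool, ∃ τ, σ <+: τ ∧ τ ∈ D

/-- A real meets a set of strings if some initial segment of it lies in the set. -/
def MeetsReal (x : ℕ → Bool) (A : Set (List Bool)) : Prop := ∃ n, restrictSeq x n ∈ A

/-- A real avoids a set of strings if no extension of some initial segment lies in the set. -/
def AvoidsReal (x : ℕ → Bool) (A : Set (List Bool)) : Prop :=
  ∃ n, ∀ τ, restrictSeq x n <+: τ → τ ∉ A

/-- A set of pairs of strings is dense if every pair has a coordinatewise extension in it. -/
def DensePair (D : Set (List Bool × List Bool)) : Prop :=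
  ∀ σ τ : List Bool, ∃ σ' τ', σ <+: σ' ∧ τ <+: τ' ∧ (σ', τ') ∈ D

/-- A pair of strings meets a set of pairs of strings if a pair of initial segments lies in it. -/
def MeetsPairStr (α β : List Bool) (D : Set (List Bool × List Bool)) : Prop :=
  ∃ α' β', α' <+: α ∧ β' <+: β ∧ (α', β') ∈ D

/-- A pair of reals meets a set of pairs of strings if a pair of initial segments lies in it. -/
def MeetsPairReal (x y : ℕ → Bool) (D : Set (List Bool × List Bool)) : Prop :=
  ∃ a b, (restrictSeq x a, restrictSeq y b) ∈ D

/-- `x` agrees with the string `s` on the interval `[k, k + |s|)`. -/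
def AgreesOn (x : ℕ → Bool) (k : ℕ) (s : List Bool) : Prop :=
  ∀ i, (h : i < s.length) → x (k + i) = s[i]

theorem MeetsPairStr.append {α β : List Bool} {D : Set (List Bool × List Bool)}
    (h : MeetsPairStr α β D) (u v : List Bool) : MeetsPairStr (α ++ u) (β ++ v) D := by
  obtain ⟨α', β', hα, hβ, hD⟩ := h
  exact ⟨α', β', hα.trans (List.prefix_append α u), hβ.trans (List.prefix_append β v), hD⟩

/-- Extending the newest pair into its set keeps the earlier pairs inside theirs. -/
theorem exists_append_meetsPairStr_of_finite {ι : Type*} {s : Set ι} (hs : s.Finite)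
    (α β : ι → List Bool) (E : ι → Set (List Bool × List Bool))
    (hE : ∀ i ∈ s, DensePair (E i)) :
    ∃ u v : List Bool, ∀ i ∈ s, MeetsPairStr (α i ++ u) (β i ++ v) (E i) := by
  induction s, hs using Set.Finite.induction_on with
  | empty => exact ⟨[], [], by simp⟩
  | @insert j s _ _ ih =>
    obtain ⟨u, v, huv⟩ := ih fun i hi => hE i (Set.mem_insert_of_mem j hi)
    obtain ⟨σ, τ, ⟨u', hu'⟩, ⟨v', hv'⟩, hστ⟩ := hE j (Set.mem_insert j s) (α j ++ u) (β j ++ v)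
    refine ⟨u ++ u', v ++ v', ?_⟩
    rintro i (rfl | hi)
    · refine ⟨σ, τ, ?_, ?_, hστ⟩
      · rw [← hu', List.append_assoc]
      · rw [← hv', List.append_assoc]
    · simpa only [List.append_assoc] using (huv i hi).append u' v'

/-- Process lemma: given countably many dense sets of pairs of strings, there are functions
`g₁, g₂` such that for every `n` and all strings `γ₁, γ₂` of length `n`, the pair
`(γ₁⌢g₁(n), γ₂⌢g₂(n))` meets all of `D₀, …, D_n`. -/
theorem stmt_3 (D : ℕ → Set (List Bool × List Bool)) (hD : ∀ n, DensePair (D n)) :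
    ∃ g₁ g₂ : ℕ → List Bool, ∀ n : ℕ, ∀ γ₁ γ₂ : List Bool,
      γ₁.length = n → γ₂.length = n →
      ∀ i ≤ n, MeetsPairStr (γ₁ ++ g₁ n) (γ₂ ++ g₂ n) (D i) := by
  have hfin (n : ℕ) : ({γ : List Bool | γ.length = n} ×ˢ {γ : List Bool | γ.length = n} ×ˢ
      Set.Iic n).Finite :=
    (List.finite_length_eq Bool n).prod ((List.finite_length_eq Bool n).prod (Set.finite_Iic n))
  choose g₁ g₂ hg using fun n => exists_append_meetsPairStr_of_finite (hfin n)
    (fun p => p.1) (fun p => p.2.1) (fun p => D p.2.2) (fun p _ => hD p.2.2)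
  exact ⟨g₁, g₂, fun n γ₁ γ₂ h₁ h₂ i hi => hg n (γ₁, γ₂, i) ⟨h₁, h₂, hi⟩⟩
end

section
/- Let (D_n)_{n∈ℕ} be a countable family of dense subsets of 2^{<ℕ} × 2^{<ℕ} and let g₁ : ℕ → 2^{<ℕ} be any function with g₁(n) nonempty for all n. Define k₀ = 0 and k_{n+1} = k_n + |g₁(k_n)|. Then for any countable family (E_n)_{n∈ℕ} of dense subsets of 2^{<ℕ}, there exist reals x, y ∈ 2^ℕ such that both x and y meet every E_n, and for every n, either x restricted to the interval [k_n, k_{n+1}) equals g₁(k_n) or y restricted to [k_n, k_{n+1}) equals g₁(k_n). -/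
/-!
Let `z` be the real obtained by writing the blocks `g₁(k_n)` one after another, so that copying
the block `n` means agreeing with `z` on `[k_n, k_{n+1})`. Build `x` and `y` as limits of finite
approximations whose lengths sit on block boundaries. At stage `n` first extend the `x`-string
into `E_n` while the `y`-string copies `z`, pad the `x`-string with `z` up to the next block
boundary, and then do the same with the roles of `x` and `y` exchanged. Every block is filled at
some stage by a string that was copying `z` at that moment.
-/

theorem restrictSeq_length_eq_iff {x : ℕ → Bool} {l : List Bool} :
    restrictSeq x l.length = l ↔ ∀ i (hi : i < l.length), x i = l[i] := by
  constructor
  · rintro h i hi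
    have hxi : (restrictSeq x l.length)[i]? = some (x i) := by simp [restrictSeq, hi]
    rw [h, List.getElem?_eq_getElem hi] at hxi
    exact (Option.some.inj hxi).symm
  · intro h
    refine List.ext_getElem (by simp [restrictSeq]) fun i _ hi => ?_
    simp [restrictSeq, h i hi]

theorem restrictSeq_length_of_prefix {x : ℕ → Bool} {σ τ : List Bool}
    (hσ : restrictSeq x σ.length = σ) (hτ : τ <+: σ) : restrictSeq x τ.length = τ := by
  rw [restrictSeq_length_eq_iff] at hσ ⊢
  intro i hi
  rw [hσ i (hi.trans_le hτ.length_le), hτ.getElem hi]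

theorem meetsReal_of_prefix {x : ℕ → Bool} {σ τ : List Bool} {A : Set (List Bool)}
    (hσ : restrictSeq x σ.length = σ) (hτ : τ <+: σ) (hτA : τ ∈ A) : MeetsReal x A :=
  ⟨τ.length, by rwa [restrictSeq_length_of_prefix hσ hτ]⟩

theorem exists_restrictSeq_eq_of_prefix_chain {σ : ℕ → List Bool}
    (hσ : ∀ n, σ n <+: σ (n + 1)) (hlen : ∀ n, n ≤ (σ n).length) :
    ∃ x : ℕ → Bool, ∀ n, restrictSeq x (σ n).length = σ n := by
  have chain {m n : ℕ} (h : m ≤ n) : σ m <+: σ n :=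
    Nat.rel_of_forall_rel_succ_of_le (· <+: ·) hσ h
  refine ⟨fun p => (σ (p + 1)).getD p false, fun n => restrictSeq_length_eq_iff.2 fun i hi => ?_⟩
  have hi' : i < (σ (i + 1)).length := hlen (i + 1)
  rw [List.getD_eq_getElem _ _ hi']
  rcases le_total n (i + 1) with h | h
  · exact ((chain h).getElem hi).symm
  · exact (chain h).getElem hi'

theorem List.IsPrefix.getElem?_eq_some {α : Type*} {l₁ l₂ : List α} (h : l₁ <+: l₂) {p : ℕ} {b : α}
    (hp : l₁[p]? = some b) : l₂[p]? = some b := by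
  obtain ⟨t, rfl⟩ := h
  rw [List.getElem?_append_left (List.getElem?_eq_some_iff.1 hp).1, hp]

def FollowsOn (z : ℕ → Bool) (l : List Bool) (a b : ℕ) : Prop :=
  ∀ p, a ≤ p → p < b → l[p]? = some (z p)

namespace FollowsOn

variable {z : ℕ → Bool} {l : List Bool} {a b : ℕ}

theorem of_prefix (h : FollowsOn z l a b) {l' : List Bool} (hl : l <+: l') :
    FollowsOn z l' a b :=
  fun p h₁ h₂ => hl.getElem?_eq_some (h p h₁ h₂)

theorem mono (h : FollowsOn z l a b) {a' b' : ℕ} (ha : a ≤ a') (hb : b' ≤ b) :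
    FollowsOn z l a' b' :=
  fun p h₁ h₂ => h p (ha.trans h₁) (h₂.trans_le hb)

theorem eqOn {x : ℕ → Bool} (h : FollowsOn z l a b) (hx : restrictSeq x l.length = l) :
    Set.EqOn x z (Set.Ico a b) := by
  rintro p ⟨h₁, h₂⟩
  obtain ⟨hp, hlp⟩ := List.getElem?_eq_some_iff.1 (h p h₁ h₂)
  rw [restrictSeq_length_eq_iff.1 hx p hp, hlp]

end FollowsOn

def padTo (z : ℕ → Bool) (l : List Bool) (b : ℕ) : List Bool :=
  l ++ List.ofFn fun i : Fin (b - l.length) => z (l.length + i)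

section Padding

variable {z : ℕ → Bool} {l : List Bool} {b : ℕ}

theorem length_padTo (h : l.length ≤ b) : (padTo z l b).length = b := by
  simp only [padTo, List.length_append, List.length_ofFn]
  omega

theorem prefix_padTo : l <+: padTo z l b := List.prefix_append _ _

theorem followsOn_padTo : FollowsOn z (padTo z l b) l.length b := by
  intro p h₁ h₂
  rw [padTo, List.getElem?_append_right h₁, List.getElem?_ofFn, dif_pos (by omega)]
  simp only [Option.some.injEq]
  congr 1
  omega

end Padding

structure Stage (z : ℕ → Bool) (k : ℕ → ℕ) where
  left : List Bool
  right : List Bool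
  block : ℕ
  length_left : left.length = k block
  length_right : right.length = k block
  covered : ∀ j < block,
    FollowsOn z left (k j) (k (j + 1)) ∨ FollowsOn z right (k j) (k (j + 1))

namespace Stage

variable {z : ℕ → Bool} {k : ℕ → ℕ}

def swap (s : Stage z k) : Stage z k :=
  ⟨s.right, s.left, s.block, s.length_right, s.length_left, fun j hj => (s.covered j hj).symm⟩

def init (z : ℕ → Bool) (k : ℕ → ℕ) : Stage z k :=
  ⟨padTo z [] (k 0), padTo z [] (k 0), 0, length_padTo (Nat.zero_le _),
    length_padTo (Nat.zero_le _), fun j hj => absurd hj (Nat.not_lt_zero j)⟩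

theorem block_le_length_left (hk : StrictMono k) (s : Stage z k) : s.block ≤ s.left.length :=
  s.length_left ▸ hk.id_le s.block

theorem exists_extend_left (hk : StrictMono k) (s : Stage z k) {E : Set (List Bool)}
    (hE : DenseStr E) :
    ∃ s' : Stage z k, s.left <+: s'.left ∧ s.right <+: s'.right ∧ s.block < s'.block ∧
      ∃ τ ∈ E, τ <+: s'.left := by
  obtain ⟨τ, hτ, hτE⟩ := hE s.left
  set a := max (s.block + 1) τ.length
  have hτa : τ.length ≤ k a := (le_max_right _ _).trans (hk.id_le a)
  have hblock : s.block < a := Nat.lt_of_succ_le (le_max_left _ _)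
  have hright : s.right.length ≤ k a := s.length_right ▸ hk.monotone hblock.le
  refine ⟨⟨padTo z τ (k a), padTo z s.right (k a), a, length_padTo hτa, length_padTo hright,
    fun j hj => ?_⟩, hτ.trans prefix_padTo, prefix_padTo, hblock, τ, hτE, prefix_padTo⟩
  rcases lt_or_ge j s.block with hjs | hjs
  · exact (s.covered j hjs).imp (·.of_prefix (hτ.trans prefix_padTo)) (·.of_prefix prefix_padTo)
  · exact .inr <| followsOn_padTo.mono (s.length_right ▸ hk.monotone hjs) (hk.monotone hj)

theorem exists_extend (hk : StrictMono k) (s : Stage z k) {E : Set (List Bool)}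
    (hE : DenseStr E) :
    ∃ s' : Stage z k, s.left <+: s'.left ∧ s.right <+: s'.right ∧ s.block < s'.block ∧
      (∃ τ ∈ E, τ <+: s'.left) ∧ ∃ τ ∈ E, τ <+: s'.right := by
  obtain ⟨s₁, hl₁, hr₁, hb₁, τ, hτE, hτ⟩ := s.exists_extend_left hk hE
  obtain ⟨s₂, hl₂, hr₂, hb₂, τ', hτ'E, hτ'⟩ := s₁.swap.exists_extend_left hk hE
  exact ⟨s₂.swap, hl₁.trans hr₂, hr₁.trans hl₂, hb₁.trans hb₂, ⟨τ, hτE, hτ.trans hr₂⟩,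
    τ', hτ'E, hτ'⟩

end Stage

theorem exists_meetsReal_and_eqOn_or_eqOn (z : ℕ → Bool) {k : ℕ → ℕ} (hk : StrictMono k)
    {E : ℕ → Set (List Bool)} (hE : ∀ n, DenseStr (E n)) :
    ∃ x y : ℕ → Bool, (∀ n, MeetsReal x (E n)) ∧ (∀ n, MeetsReal y (E n)) ∧
      ∀ j, Set.EqOn x z (Set.Ico (k j) (k (j + 1))) ∨ Set.EqOn y z (Set.Ico (k j) (k (j + 1))) := by
  choose next hleft hright hblock hmeet_left hmeet_right using
    fun n (s : Stage z k) => s.exists_extend hk (hE n)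
  let s : ℕ → Stage z k := fun n => Nat.rec (motive := fun _ => Stage z k) (.init z k) next n
  have hs_block (n : ℕ) : n ≤ (s n).block := by
    induction n with
    | zero => exact Nat.zero_le _
    | succ n ih => exact ih.trans_lt (hblock n (s n))
  have hs_len (n : ℕ) : n ≤ (s n).left.length := (hs_block n).trans ((s n).block_le_length_left hk)
  obtain ⟨x, hx⟩ := exists_restrictSeq_eq_of_prefix_chain (σ := fun n => (s n).left)
    (fun n => hleft n (s n)) hs_len
  obtain ⟨y, hy⟩ := exists_restrictSeq_eq_of_prefix_chain (σ := fun n => (s n).right)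
    (fun n => hright n (s n)) fun n => (hs_block n).trans ((s n).swap.block_le_length_left hk)
  refine ⟨x, y, fun n => ?_, fun n => ?_, fun j => ?_⟩
  · obtain ⟨τ, hτE, hτ⟩ := hmeet_left n (s n)
    exact meetsReal_of_prefix (hx (n + 1)) hτ hτE
  · obtain ⟨τ, hτE, hτ⟩ := hmeet_right n (s n)
    exact meetsReal_of_prefix (hy (n + 1)) hτ hτE
  · exact ((s (j + 1)).covered j (hs_block (j + 1))).imp
      (·.eqOn (hx (j + 1))) (·.eqOn (hy (j + 1)))

noncomputable def blockIndex (k : ℕ → ℕ) (p : ℕ) : ℕ :=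
  Nat.findGreatest (fun j => k j ≤ p) p

noncomputable def concatBlocks (k : ℕ → ℕ) (w : ℕ → List Bool) (p : ℕ) : Bool :=
  (w (blockIndex k p)).getD (p - k (blockIndex k p)) false

section Blocks

variable {k : ℕ → ℕ} {w : ℕ → List Bool}

theorem blockIndex_eq (hk : StrictMono k) {j p : ℕ} (h₁ : k j ≤ p) (h₂ : p < k (j + 1)) :
    blockIndex k p = j := by
  rw [blockIndex, Nat.findGreatest_eq_iff]
  refine ⟨(hk.id_le j).trans h₁, fun _ => h₁, fun m hm _ hkm => ?_⟩
  exact absurd (h₂.trans_le (hk.monotone hm)) (not_lt.mpr hkm)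

theorem agreesOn_of_eqOn_concatBlocks (hk : StrictMono k) {j : ℕ}
    (hw : k (j + 1) = k j + (w j).length) {x : ℕ → Bool}
    (h : Set.EqOn x (concatBlocks k w) (Set.Ico (k j) (k (j + 1)))) : AgreesOn x (k j) (w j) := by
  intro i hi
  have h₂ : k j + i < k (j + 1) := by omega
  rw [h ⟨Nat.le_add_right _ _, h₂⟩, concatBlocks, blockIndex_eq hk (Nat.le_add_right _ _) h₂,
    Nat.add_sub_cancel_left, List.getD_eq_getElem _ _ hi]

end Blocks

theorem stmt_4_general (g₁ : ℕ → List Bool) (hg₁ : ∀ n, g₁ n ≠ [])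
    (k : ℕ → ℕ) (hks : ∀ n, k (n + 1) = k n + (g₁ (k n)).length)
    (E : ℕ → Set (List Bool)) (hE : ∀ n, DenseStr (E n)) :
    ∃ x y : ℕ → Bool,
      (∀ n, MeetsReal x (E n)) ∧ (∀ n, MeetsReal y (E n)) ∧
      ∀ n, AgreesOn x (k n) (g₁ (k n)) ∨ AgreesOn y (k n) (g₁ (k n)) := by
  have hk : StrictMono k := strictMono_nat_of_lt_succ fun n => by
    rw [hks]
    exact Nat.lt_add_of_pos_right (List.length_pos_iff.2 (hg₁ (k n)))
  obtain ⟨x, y, hx, hy, hxy⟩ :=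
    exists_meetsReal_and_eqOn_or_eqOn (concatBlocks k fun n => g₁ (k n)) hk hE
  exact ⟨x, y, hx, hy, fun n => (hxy n).imp (agreesOn_of_eqOn_concatBlocks hk (hks n))
    (agreesOn_of_eqOn_concatBlocks hk (hks n))⟩

/-- Construction lemma: there are reals `x, y` each meeting every dense set `E_n`, such that
for every `n` one of `x, y` copies the block `g₁(k_n)` on the interval `[k_n, k_{n+1})`. -/
theorem stmt_4 (D : ℕ → Set (List Bool × List Bool)) (hD : ∀ n, DensePair (D n))
    (g₁ : ℕ → List Bool) (hg₁ : ∀ n, g₁ n ≠ [])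
    (k : ℕ → ℕ) (hk0 : k 0 = 0) (hks : ∀ n, k (n + 1) = k n + (g₁ (k n)).length)
    (E : ℕ → Set (List Bool)) (hE : ∀ n, DenseStr (E n)) :
    ∃ x y : ℕ → Bool,
      (∀ n, MeetsReal x (E n)) ∧ (∀ n, MeetsReal y (E n)) ∧
      ∀ n, AgreesOn x (k n) (g₁ (k n)) ∨ AgreesOn y (k n) (g₁ (k n)) :=
  stmt_4_general g₁ hg₁ k hks E hE
end

section
/- Let X be a set, E an equivalence relation on X, and G a graphing of E with diameter at most 2. Fix an E-class C and a binary relation M on C (thought of as 'mutual genericity') such that (i) no edge of G connects two M-related points of C, and (ii) there exist x, y ∈ C such that every z ∈ C satisfies M(x,z) or M(y,z), and M is irreflexive. Then we reach a contradiction: such G cannot exist. -/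
section DominatingPair

variable {X : Type*} {G M : X → X → Prop} {C : Set X} {x y : X}

theorem rel_of_dominates (hMirrefl : ∀ u, ¬ M u u) (hdom : ∀ z ∈ C, M x z ∨ M y z)
    (hy : y ∈ C) : M x y :=
  (hdom y hy).resolve_right (hMirrefl y)

theorem mem_of_adj_of_mem_class {E : X → X → Prop}
    (hgraphing : ∀ u v, E u v ↔ Relation.ReflTransGen G u v)
    (hCclass : ∀ u ∈ C, ∀ v, v ∈ C ↔ E u v) (hx : x ∈ C) {w : X} (hxw : G x w) : w ∈ C :=
  (hCclass x hx w).mpr ((hgraphing x w).mpr (.single hxw))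

theorem not_adj_adj_of_dominates (hsymm : ∀ u v, G u v → G v u)
    (hNoEdge : ∀ u ∈ C, ∀ v ∈ C, M u v → ¬ G u v) (hdom : ∀ z ∈ C, M x z ∨ M y z)
    (hx : x ∈ C) (hy : y ∈ C) {w : X} (hw : w ∈ C) (hxw : G x w) (hwy : G w y) : False := by
  rcases hdom w hw with hMxw | hMyw
  · exact hNoEdge x hx w hw hMxw hxw
  · exact hNoEdge y hy w hw hMyw (hsymm w y hwy)

end DominatingPair

theorem stmt_12_general {X : Type*} (E : X → X → Prop)
    (G : X → X → Prop) (hsymm : ∀ u v, G u v → G v u)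
    (hgraphing : ∀ u v, E u v ↔ Relation.ReflTransGen G u v)
    (hdiam : ∀ u v, E u v → u = v ∨ G u v ∨ ∃ w, G u w ∧ G w v)
    (C : Set X) (hCclass : ∀ u ∈ C, ∀ v, v ∈ C ↔ E u v)
    (M : X → X → Prop)
    (hNoEdge : ∀ u ∈ C, ∀ v ∈ C, M u v → ¬ G u v)
    (hMirrefl : ∀ u, ¬ M u u)
    (x : X) (hx : x ∈ C) (y : X) (hy : y ∈ C)
    (hdom : ∀ z ∈ C, M x z ∨ M y z) :
    False := by
  have hMxy : M x y := rel_of_dominates hMirrefl hdom hy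
  rcases hdiam x y ((hCclass x hx y).mp hy) with rfl | hxy | ⟨w, hxw, hwy⟩
  · exact hMirrefl x hMxy
  · exact hNoEdge x hx y hy hMxy hxy
  · exact not_adj_adj_of_dominates hsymm hNoEdge hdom hx hy
      (mem_of_adj_of_mem_class hgraphing hCclass hx hxw) hxw hwy

/-- A graphing of diameter at most 2 cannot exist when some class `C` carries an irreflexive
"mutual genericity" relation `M` such that no edge joins `M`-related points of `C` and two
points of `C` jointly `M`-dominate all of `C`. -/
theorem stmt_12 {X : Type*} (E : X → X → Prop) (hEquiv : Equivalence E)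
    (G : X → X → Prop) (hsymm : ∀ u v, G u v → G v u) (hirrefl : ∀ u, ¬ G u u)
    (hgraphing : ∀ u v, E u v ↔ Relation.ReflTransGen G u v)
    (hdiam : ∀ u v, E u v → u = v ∨ G u v ∨ ∃ w, G u w ∧ G w v)
    (C : Set X) (hCclass : ∀ u ∈ C, ∀ v, v ∈ C ↔ E u v)
    (M : X → X → Prop)
    (hNoEdge : ∀ u ∈ C, ∀ v ∈ C, M u v → ¬ G u v)
    (hMirrefl : ∀ u, ¬ M u u)
    (x : X) (hx : x ∈ C) (y : X) (hy : y ∈ C)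
    (hdom : ∀ z ∈ C, M x z ∨ M y z) :
    False :=
  stmt_12_general E G hsymm hgraphing hdiam C hCclass M hNoEdge hMirrefl x hx y hy hdom
end

section
/- Given countably many dense subsets (E_n) of 2^{<ℕ} and a function f : 2^{<ℕ} → 2^{<ℕ} assigning to each string an extension meeting a prescribed dense set, the following interleaved construction terminates at each stage and produces two reals x, y ∈ 2^ℕ: alternately extend the approximation to x to meet E_{n+1} (padding with 0s to a prescribed length k_{m'}), while extending the approximation to y by copying prescribed blocks g₁(k_m)⌢...⌢g₁(k_{m'-1}), then swap roles. The resulting x and y each meet every E_n. -/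
/-!
The two approximations `σ, τ` are built in rounds, both of length `k m` at the end of every
round. In round `n`, `σ` is extended by `f` into `E n` and padded with `false` up to length
`k m'` for a level `m' > m`, while `τ` grows from length `k m` to `k m'` by copying the blocks
`g₁ (k m), …, g₁ (k (m' - 1))` in place; then the roles of `σ` and `τ` are swapped. So every
level `i < m` has its block copied at position `k i` by one of the two strings, and this
survives in the limit reals `x, y`, which meet every `E n` by construction.
-/

section ChainLimit

/-- Meant for a `<+:`-increasing chain with `n ≤ (L n).length`, where the default `false` is
never used. -/
def chainLimit (L : ℕ → List Bool) (i : ℕ) : Bool := (L (i + 1)).getD i false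

variable {L : ℕ → List Bool}

lemma restrictSeq_chainLimit_of_prefix (hL : ∀ n, L n <+: L (n + 1))
    (hlen : ∀ n, n ≤ (L n).length) {a : List Bool} {s : ℕ} (ha : a <+: L s) :
    restrictSeq (chainLimit L) a.length = a := by
  have chain : ∀ {s t}, s ≤ t → L s <+: L t := fun {s} _ hst => by
    induction hst with
    | refl => exact List.prefix_refl _
    | step _ ih => exact ih.trans (hL _)
  refine List.ext_getElem (by simp [restrictSeq]) fun i hi hia => ?_
  have hiL : i < (L (i + 1)).length := Nat.lt_of_lt_of_le i.lt_succ_self (hlen _)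
  have his : i < (L s).length := Nat.lt_of_lt_of_le hia ha.length_le
  simp only [restrictSeq, List.getElem_ofFn, chainLimit, List.getD_eq_getElem _ _ hiL]
  rw [ha.getElem hia]
  rcases le_total s (i + 1) with h | h
  · exact ((chain h).getElem his).symm
  · exact (chain h).getElem hiL

lemma agreesOn_of_restrictSeq_eq {x : ℕ → Bool} {u w : List Bool}
    (h : restrictSeq x (u ++ w).length = u ++ w) : AgreesOn x u.length w := by
  intro i hi
  have hlt : u.length + i < (u ++ w).length := by simp [hi]
  have := congrArg (·[u.length + i]?) h
  simp only [restrictSeq, List.getElem?_ofFn, dif_pos hlt] at this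
  simpa [List.getElem?_append_right, List.getElem?_eq_getElem hi] using this

end ChainLimit

namespace Interleave

variable (g₁ : ℕ → List Bool) (k : ℕ → ℕ)

def blocks (m j : ℕ) : List Bool := (List.range' m j).flatMap fun i => g₁ (k i)

def HasBlock (σ : List Bool) (i : ℕ) : Prop := ∃ u, u.length = k i ∧ u ++ g₁ (k i) <+: σ

variable {g₁ k}

lemma HasBlock.mono {σ σ' : List Bool} {i : ℕ} (h : HasBlock g₁ k σ i) (hσ : σ <+: σ') :
    HasBlock g₁ k σ' i :=
  let ⟨u, hu, hpre⟩ := h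
  ⟨u, hu, hpre.trans hσ⟩

lemma HasBlock.agreesOn_chainLimit {L : ℕ → List Bool} (hL : ∀ n, L n <+: L (n + 1))
    (hlen : ∀ n, n ≤ (L n).length) {s i : ℕ} (h : HasBlock g₁ k (L s) i) :
    AgreesOn (chainLimit L) (k i) (g₁ (k i)) := by
  obtain ⟨u, hu, hpre⟩ := h
  simpa only [hu] using agreesOn_of_restrictSeq_eq (restrictSeq_chainLimit_of_prefix hL hlen hpre)

lemma blocks_succ (m j : ℕ) : blocks g₁ k m (j + 1) = blocks g₁ k m j ++ g₁ (k (m + j)) := by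
  simp [blocks, List.range'_concat]

variable (hks : ∀ n, k (n + 1) = k n + (g₁ (k n)).length)
include hks

lemma length_blocks (m j : ℕ) : k m + (blocks g₁ k m j).length = k (m + j) := by
  induction j with
  | zero => simp [blocks]
  | succ j ih => rw [blocks_succ, List.length_append, ← add_assoc, ih]; exact (hks _).symm

lemma hasBlock_append_blocks {τ : List Bool} {m i : ℕ} (hτ : τ.length = k m) :
    ∀ {j}, m ≤ i → i < m + j → HasBlock g₁ k (τ ++ blocks g₁ k m j) i
  | 0, _, hij => by omega
  | j + 1, hmi, hij => by
    rw [blocks_succ, ← List.append_assoc]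
    rcases Nat.lt_or_ge i (m + j) with hij | hij
    · exact (hasBlock_append_blocks hτ hmi hij).mono (List.prefix_append _ _)
    · obtain rfl : i = m + j := by omega
      exact ⟨_, by rw [List.length_append, hτ, length_blocks hks], List.prefix_refl _⟩

omit hks

structure Stage where
  σ : List Bool
  τ : List Bool
  m : ℕ

def Stage.swap (s : Stage) : Stage := ⟨s.τ, s.σ, s.m⟩

variable (g₁ k) in
structure Stage.Valid (s : Stage) : Prop where
  length_σ : s.σ.length = k s.m
  length_τ : s.τ.length = k s.m
  covered : ∀ i < s.m, HasBlock g₁ k s.σ i ∨ HasBlock g₁ k s.τ i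

lemma Stage.Valid.swap {s : Stage} (hs : s.Valid g₁ k) : s.swap.Valid g₁ k :=
  ⟨hs.length_τ, hs.length_σ, fun i hi => (hs.covered i hi).symm⟩

variable (g₁ k) (f : List Bool → ℕ → List Bool)

def nextLevel (n : ℕ) (s : Stage) : ℕ := max (s.m + 1) (f s.σ n).length

/-- Since `k` is strictly increasing, `k (nextLevel f n s) ≥ (f s.σ n).length`, so the padding
makes the first string exactly as long as the second. -/
def step (n : ℕ) (s : Stage) : Stage :=
  ⟨f s.σ n ++ List.replicate (k (nextLevel f n s) - (f s.σ n).length) false,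
    s.τ ++ blocks g₁ k s.m (nextLevel f n s - s.m), nextLevel f n s⟩

def round (n : ℕ) (s : Stage) : Stage := (step g₁ k f n (step g₁ k f n s).swap).swap

def stages : ℕ → Stage
  | 0 => ⟨[], [], 0⟩
  | n + 1 => round g₁ k f n (stages n)

variable {g₁ k f}

lemma lt_nextLevel (n : ℕ) (s : Stage) : s.m < nextLevel f n s :=
  Nat.lt_of_lt_of_le s.m.lt_succ_self (le_max_left _ _)

lemma valid_step (hk : StrictMono k) (hks : ∀ n, k (n + 1) = k n + (g₁ (k n)).length)
    (hf : ∀ σ n, σ <+: f σ n) {s : Stage} (hs : s.Valid g₁ k) (n : ℕ) :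
    (step g₁ k f n s).Valid g₁ k := by
  have hm := lt_nextLevel (f := f) n s
  have hσ : s.σ <+: (step g₁ k f n s).σ := (hf _ _).trans (List.prefix_append _ _)
  have hτ : s.τ <+: (step g₁ k f n s).τ := List.prefix_append _ _
  refine ⟨?_, ?_, fun i hi => ?_⟩
  · have := (le_max_right _ _).trans (hk.le_apply (x := nextLevel f n s))
    simp only [step, List.length_append, List.length_replicate]
    omega
  · have := length_blocks hks s.m (nextLevel f n s - s.m)
    rw [Nat.add_sub_cancel' hm.le] at this
    simp only [step, List.length_append, hs.length_τ]
    omega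
  · rcases Nat.lt_or_ge i s.m with his | his
    · exact (hs.covered i his).imp (·.mono hσ) (·.mono hτ)
    · exact Or.inr (hasBlock_append_blocks hks hs.length_τ his (by simp only [step] at hi; omega))

lemma valid_round (hk : StrictMono k) (hks : ∀ n, k (n + 1) = k n + (g₁ (k n)).length)
    (hf : ∀ σ n, σ <+: f σ n) {s : Stage} (hs : s.Valid g₁ k) (n : ℕ) :
    (round g₁ k f n s).Valid g₁ k :=
  (valid_step hk hks hf (valid_step hk hks hf hs n).swap n).swap

lemma valid_stages (hk0 : k 0 = 0) (hk : StrictMono k)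
    (hks : ∀ n, k (n + 1) = k n + (g₁ (k n)).length) (hf : ∀ σ n, σ <+: f σ n) :
    ∀ n, (stages g₁ k f n).Valid g₁ k
  | 0 => ⟨by simp [stages, hk0], by simp [stages, hk0], by simp [stages]⟩
  | n + 1 => valid_round hk hks hf (valid_stages hk0 hk hks hf n) n

lemma lt_m_round (n : ℕ) (s : Stage) : s.m < (round g₁ k f n s).m :=
  (lt_nextLevel (f := f) n s).trans (lt_nextLevel n (step g₁ k f n s).swap)

lemma le_m_stages : ∀ n, n ≤ (stages g₁ k f n).m
  | 0 => le_rfl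
  | n + 1 => Nat.succ_le_of_lt <| (le_m_stages n).trans_lt (lt_m_round n _)

lemma f_σ_prefix_stages_succ (n : ℕ) :
    f (stages g₁ k f n).σ n <+: (stages g₁ k f (n + 1)).σ :=
  (List.prefix_append _ _).trans (List.prefix_append _ _)

lemma f_τ_prefix_stages_succ (n : ℕ) :
    f (step g₁ k f n (stages g₁ k f n)).τ n <+: (stages g₁ k f (n + 1)).τ :=
  List.prefix_append _ _

lemma stages_σ_prefix_succ (hf : ∀ σ n, σ <+: f σ n) (n : ℕ) :
    (stages g₁ k f n).σ <+: (stages g₁ k f (n + 1)).σ :=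
  (hf _ n).trans (f_σ_prefix_stages_succ n)

lemma stages_τ_prefix_succ (hf : ∀ σ n, σ <+: f σ n) (n : ℕ) :
    (stages g₁ k f n).τ <+: (stages g₁ k f (n + 1)).τ :=
  ((List.prefix_append _ _).trans (hf _ n)).trans (f_τ_prefix_stages_succ n)

end Interleave

open Interleave

theorem stmt_13_general (E : ℕ → Set (List Bool))
    (f : List Bool → ℕ → List Bool)
    (hf : ∀ σ n, σ <+: f σ n ∧ f σ n ∈ E n)
    (g₁ : ℕ → List Bool) (hg₁ : ∀ n, g₁ n ≠ [])
    (k : ℕ → ℕ) (hk0 : k 0 = 0) (hks : ∀ n, k (n + 1) = k n + (g₁ (k n)).length) :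
    ∃ x y : ℕ → Bool,
      (∀ n, MeetsReal x (E n)) ∧ (∀ n, MeetsReal y (E n)) ∧
      ∀ m, AgreesOn x (k m) (g₁ (k m)) ∨ AgreesOn y (k m) (g₁ (k m)) := by
  have hk : StrictMono k := strictMono_nat_of_lt_succ fun n => by
    rw [hks]; exact Nat.lt_add_of_pos_right (List.length_pos_iff.2 (hg₁ _))
  have hext σ n : σ <+: f σ n := (hf σ n).1
  set L := stages g₁ k f
  have hvalid := valid_stages hk0 hk hks hext
  have hlen n : n ≤ k (L n).m := (le_m_stages n).trans hk.le_apply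
  have hσ := stages_σ_prefix_succ (g₁ := g₁) (k := k) hext
  have hτ := stages_τ_prefix_succ (g₁ := g₁) (k := k) hext
  have hlenσ n : n ≤ (L n).σ.length := (hvalid n).length_σ ▸ hlen n
  have hlenτ n : n ≤ (L n).τ.length := (hvalid n).length_τ ▸ hlen n
  refine ⟨chainLimit fun n => (L n).σ, chainLimit fun n => (L n).τ,
    fun n => ⟨(f (L n).σ n).length, ?_⟩, fun n => ⟨(f (step g₁ k f n (L n)).τ n).length, ?_⟩,
    fun m => ?_⟩
  · rw [restrictSeq_chainLimit_of_prefix hσ hlenσ (f_σ_prefix_stages_succ n)]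
    exact (hf _ n).2
  · rw [restrictSeq_chainLimit_of_prefix hτ hlenτ (f_τ_prefix_stages_succ n)]
    exact (hf _ n).2
  · exact ((hvalid (m + 1)).covered m (le_m_stages (m + 1))).imp
      (·.agreesOn_chainLimit hσ hlenσ) (·.agreesOn_chainLimit hτ hlenτ)

/-- The interleaved construction: given dense sets `E_n` and an extension function `f` sending
each string to an extension lying in the prescribed dense set, there are reals `x, y` each
meeting every `E_n`, alternately copying the prescribed blocks `g₁(k_m)`. -/
theorem stmt_13 (E : ℕ → Set (List Bool)) (hE : ∀ n, DenseStr (E n))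
    (f : List Bool → ℕ → List Bool)
    (hf : ∀ σ n, σ <+: f σ n ∧ f σ n ∈ E n)
    (g₁ : ℕ → List Bool) (hg₁ : ∀ n, g₁ n ≠ [])
    (k : ℕ → ℕ) (hk0 : k 0 = 0) (hks : ∀ n, k (n + 1) = k n + (g₁ (k n)).length) :
    ∃ x y : ℕ → Bool,
      (∀ n, MeetsReal x (E n)) ∧ (∀ n, MeetsReal y (E n)) ∧
      ∀ m, AgreesOn x (k m) (g₁ (k m)) ∨ AgreesOn y (k m) (g₁ (k m)) :=
  stmt_13_general E f hf g₁ hg₁ k hk0 hks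
end

section
/- Suppose (D_n) enumerates dense subsets of 2^{<ℕ} × 2^{<ℕ} and g₁, g₂ : ℕ → 2^{<ℕ} satisfy: for all n and all strings γ₁, γ₂ of length n, (γ₁⌢g₁(n), γ₂⌢g₂(n)) meets D₀,...,D_n. Define k₀ = 0, k_{m+1} = k_m + |g₁(k_m)|, assumed strictly increasing. Let x, y ∈ 2^ℕ be such that for all m, x or y restricted to [k_m, k_{m+1}) equals g₁(k_m). Let z ∈ 2^ℕ meet F_n = {τ⌢g₂(k_m) : k_m > n, |τ| = k_m} for every n. Then either (x, z) meets every D_n, or (y, z) meets every D_n. -/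
/-!
Given `n`, take `m` with `k m > n` such that `z` extends `z↾(k m) ++ g₂ (k m)`. One of `x`, `y`
copies `g₁ (k m)` from position `k m` on, i.e. extends `_↾(k m) ++ g₁ (k m)`, so by the process
property that real, paired with `z`, meets `D 0, …, D n`. Hence for every `n` one of the two
pairs meets `D 0, …, D n`, and then one of them meets every `D n`.
-/

@[simp]
lemma length_restrictSeq (x : ℕ → Bool) (n : ℕ) : (restrictSeq x n).length = n := by
  simp [restrictSeq]

@[simp]
lemma getElem_restrictSeq (x : ℕ → Bool) (n i : ℕ) (h : i < (restrictSeq x n).length) :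
    (restrictSeq x n)[i] = x i := by
  simp [restrictSeq]

lemma List.IsPrefix.eq_restrictSeq {x : ℕ → Bool} {α : List Bool} {n : ℕ}
    (h : α <+: restrictSeq x n) : α = restrictSeq x α.length :=
  List.ext_getElem (by simp) fun i h₁ _ => by simp [h.getElem h₁]

lemma restrictSeq_add_length {x : ℕ → Bool} {n : ℕ} {s : List Bool} (h : AgreesOn x n s) :
    restrictSeq x (n + s.length) = restrictSeq x n ++ s := by
  refine List.ext_getElem (by simp) fun i h₁ _ => ?_
  simp only [length_restrictSeq] at h₁
  rcases lt_or_ge i n with hi | hi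
  · simp [List.getElem_append_left, hi]
  · simp only [getElem_restrictSeq, List.getElem_append_right, length_restrictSeq, hi,
      ← h (i - n) (by omega), Nat.add_sub_cancel' hi]

lemma MeetsPairStr.meetsPairReal {x y : ℕ → Bool} {a b : ℕ} {D : Set (List Bool × List Bool)}
    (h : MeetsPairStr (restrictSeq x a) (restrictSeq y b) D) : MeetsPairReal x y D := by
  obtain ⟨α, β, hα, hβ, hD⟩ := h
  exact ⟨α.length, β.length, by rwa [← hα.eq_restrictSeq, ← hβ.eq_restrictSeq]⟩

lemma meetsPairReal_of_agreesOn {x z : ℕ → Bool} {n : ℕ} {s t : List Bool}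
    {D : Set (List Bool × List Bool)} (hx : AgreesOn x n s)
    (hz : ∃ a, restrictSeq z a = restrictSeq z n ++ t)
    (h : MeetsPairStr (restrictSeq x n ++ s) (restrictSeq z n ++ t) D) :
    MeetsPairReal x z D := by
  obtain ⟨a, ha⟩ := hz
  rw [← restrictSeq_add_length hx, ← ha] at h
  exact h.meetsPairReal

lemma forall_or_forall_of_forall_le {P Q : ℕ → Prop}
    (h : ∀ n, (∀ i ≤ n, P i) ∨ (∀ i ≤ n, Q i)) : (∀ n, P n) ∨ (∀ n, Q n) := by
  refine or_iff_not_imp_left.2 fun hP n => ?_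
  obtain ⟨j, hj⟩ := not_forall.1 hP
  exact (h (max n j)).resolve_left (fun hP' => hj (hP' j (le_max_right n j))) n (le_max_left n j)

theorem stmt_17_general (D : ℕ → Set (List Bool × List Bool))
    (g₁ g₂ : ℕ → List Bool)
    (hprocess : ∀ n : ℕ, ∀ γ₁ γ₂ : List Bool, γ₁.length = n → γ₂.length = n →
      ∀ i ≤ n, MeetsPairStr (γ₁ ++ g₁ n) (γ₂ ++ g₂ n) (D i))
    (k : ℕ → ℕ)
    (x y : ℕ → Bool)
    (hxy : ∀ m, AgreesOn x (k m) (g₁ (k m)) ∨ AgreesOn y (k m) (g₁ (k m)))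
    (z : ℕ → Bool)
    (hz : ∀ n, MeetsReal z {s | ∃ (m : ℕ) (τ : List Bool),
      k m > n ∧ τ.length = k m ∧ s = τ ++ g₂ (k m)}) :
    (∀ n, MeetsPairReal x z (D n)) ∨ (∀ n, MeetsPairReal y z (D n)) := by
  refine forall_or_forall_of_forall_le fun n => ?_
  obtain ⟨a, m, τ, hmn, hτ, hza⟩ := hz n
  have hzm : ∃ a, restrictSeq z a = restrictSeq z (k m) ++ g₂ (k m) := by
    have hτz : τ <+: restrictSeq z a := hza ▸ List.prefix_append τ _
    exact ⟨a, by rw [hza, hτz.eq_restrictSeq, hτ]⟩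
  have hmeets : ∀ w, AgreesOn w (k m) (g₁ (k m)) → ∀ i ≤ n, MeetsPairReal w z (D i) :=
    fun w hw i hi => meetsPairReal_of_agreesOn hw hzm
      (hprocess (k m) _ _ (length_restrictSeq w _) (length_restrictSeq z _) i (by omega))
  exact (hxy m).imp (hmeets x) (hmeets y)

/-- Conclusion of the key lemma's verification: with `g₁, g₂` as in the process lemma, `x, y`
copying the blocks `g₁(k_m)` alternately, and `z` meeting each `F_n`, either `(x, z)` meets
every `D_n` or `(y, z)` meets every `D_n`. -/
theorem stmt_17 (D : ℕ → Set (List Bool × List Bool))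
    (g₁ g₂ : ℕ → List Bool)
    (hprocess : ∀ n : ℕ, ∀ γ₁ γ₂ : List Bool, γ₁.length = n → γ₂.length = n →
      ∀ i ≤ n, MeetsPairStr (γ₁ ++ g₁ n) (γ₂ ++ g₂ n) (D i))
    (k : ℕ → ℕ) (hk0 : k 0 = 0) (hks : ∀ m, k (m + 1) = k m + (g₁ (k m)).length)
    (hkmono : StrictMono k)
    (x y : ℕ → Bool)
    (hxy : ∀ m, AgreesOn x (k m) (g₁ (k m)) ∨ AgreesOn y (k m) (g₁ (k m)))
    (z : ℕ → Bool)
    (hz : ∀ n, MeetsReal z {s | ∃ (m : ℕ) (τ : List Bool),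
      k m > n ∧ τ.length = k m ∧ s = τ ++ g₂ (k m)}) :
    (∀ n, MeetsPairReal x z (D n)) ∨ (∀ n, MeetsPairReal y z (D n)) :=
  stmt_17_general D g₁ g₂ hprocess k x y hxy z hz
end
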